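/- For every x ∈ S, the principal right ideal of x in Σ equals (x)_r^Γ ∪ (x)_r^Γ·Γ, where (x)_r^Γ = xΓS ∪ {x} is the principal right ideal of x in the Γ-semigroup S and (x)_r^Γ·Γ = {yγ : γ ∈ Γ, y ∈ (x)_r^Γ}. -/
import Mathlib


open FreeSemigroup

section GammaSemigroup

variable {S Γ : Type}

/-- One-step rewriting on words over S ⊕ Γ. -/
inductive GStep (m : S → Γ → S → S) (γ₀ : Γ) : List (S ⊕ Γ) → List (S ⊕ Γ) → Prop
  | gg (u v : List (S ⊕ Γ)) (γ₁ γ₂ : Γ) :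
      GStep m γ₀ (u ++ Sum.inr γ₁ :: Sum.inr γ₂ :: v) (u ++ Sum.inr γ₁ :: v)
  | xgy (u v : List (S ⊕ Γ)) (x : S) (γ : Γ) (y : S) :
      GStep m γ₀ (u ++ Sum.inl x :: Sum.inr γ :: Sum.inl y :: v) (u ++ Sum.inl (m x γ y) :: v)
  | xy (u v : List (S ⊕ Γ)) (x y : S) :
      GStep m γ₀ (u ++ Sum.inl x :: Sum.inl y :: v) (u ++ Sum.inl (m x γ₀ y) :: v)

/-- The defining relations on the free semigroup on S ⊕ Γ. -/
def GRel (m : S → Γ → S → S) (γ₀ : Γ) :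
    FreeSemigroup (S ⊕ Γ) → FreeSemigroup (S ⊕ Γ) → Prop :=
  fun a b =>
    (∃ γ₁ γ₂ : Γ, a = of (Sum.inr γ₁) * of (Sum.inr γ₂) ∧ b = of (Sum.inr γ₁)) ∨
    (∃ (x y : S) (γ : Γ), a = of (Sum.inl x) * of (Sum.inr γ) * of (Sum.inl y) ∧
      b = of (Sum.inl (m x γ y))) ∨
    (∃ x y : S, a = of (Sum.inl x) * of (Sum.inl y) ∧ b = of (Sum.inl (m x γ₀ y)))

/-- The congruence generated by the defining relations. -/
def GCon (m : S → Γ → S → S) (γ₀ : Γ) : Con (FreeSemigroup (S ⊕ Γ)) := conGen (GRel m γ₀)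

/-- The universal semigroup Σ of the Γ-semigroup S. -/
abbrev USem (m : S → Γ → S → S) (γ₀ : Γ) := (GCon m γ₀).Quotient

/-- The canonical map μ : S → Σ. -/
def gmu (m : S → Γ → S → S) (γ₀ : Γ) (x : S) : USem m γ₀ :=
  ((of (Sum.inl x) : FreeSemigroup (S ⊕ Γ)) : (GCon m γ₀).Quotient)

/-- The canonical map Γ → Σ. -/
def giota (m : S → Γ → S → S) (γ₀ : Γ) (γ : Γ) : USem m γ₀ :=
  ((of (Sum.inr γ) : FreeSemigroup (S ⊕ Γ)) : (GCon m γ₀).Quotient)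

/-- Principal left ideal of an element of a semigroup. -/
def pLeft {T : Type} [Semigroup T] (a : T) : Set T := {w | ∃ t : T, w = t * a} ∪ {a}

/-- Principal right ideal of an element of a semigroup. -/
def pRight {T : Type} [Semigroup T] (a : T) : Set T := {w | ∃ t : T, w = a * t} ∪ {a}

/-- Principal left ideal in the Γ-semigroup: SΓx ∪ {x}. -/
def pLeftG (m : S → Γ → S → S) (x : S) : Set S := {y | ∃ (s : S) (γ : Γ), y = m s γ x} ∪ {x}

/-- Principal right ideal in the Γ-semigroup: xΓS ∪ {x}. -/
def pRightG (m : S → Γ → S → S) (x : S) : Set S := {y | ∃ (γ : Γ) (s : S), y = m x γ s} ∪ {x}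

/-- Green's H relation on the Γ-semigroup. -/
def HrelG (m : S → Γ → S → S) (a b : S) : Prop := pLeftG m a = pLeftG m b ∧ pRightG m a = pRightG m b

/-- S_δ is a simple semigroup: its only two-sided ideal is S itself. -/
def SimpleAt (m : S → Γ → S → S) (δ : Γ) : Prop :=
  ∀ J : Set S, J.Nonempty → (∀ t : S, ∀ j ∈ J, m t δ j ∈ J ∧ m j δ t ∈ J) → J = Set.univ

/-- e is an idempotent of S_δ. -/
def IdemAt (m : S → Γ → S → S) (δ : Γ) (e : S) : Prop := m e δ e = e

/-- e is a primitive idempotent of S_δ. -/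
def PrimAt (m : S → Γ → S → S) (δ : Γ) (e : S) : Prop :=
  IdemAt m δ e ∧ ∀ f, IdemAt m δ f → m e δ f = f → m f δ e = f → f = e

/-- S_δ is completely simple. -/
def CSimpleAt (m : S → Γ → S → S) (δ : Γ) : Prop := SimpleAt m δ ∧ ∃ e, PrimAt m δ e

/-- S_δ has no zero element. -/
def NoZeroAt (m : S → Γ → S → S) (δ : Γ) : Prop := ¬ ∃ z : S, ∀ t : S, m z δ t = z ∧ m t δ z = z

/-- L is a left ideal of S_δ. -/
def LIdealAt (m : S → Γ → S → S) (δ : Γ) (L : Set S) : Prop :=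
  L.Nonempty ∧ ∀ t : S, ∀ l ∈ L, m t δ l ∈ L

/-- L is a minimal left ideal of S_δ. -/
def MinLIdealAt (m : S → Γ → S → S) (δ : Γ) (L : Set S) : Prop :=
  LIdealAt m δ L ∧ ∀ L' ⊆ L, LIdealAt m δ L' → L' = L

/-- S_δ is a group. -/
def GroupAt (m : S → Γ → S → S) (δ : Γ) : Prop :=
  ∃ e : S, (∀ a, m e δ a = a ∧ m a δ e = a) ∧ ∀ a, ∃ b, m a δ b = e ∧ m b δ a = e

/-- G is a subgroup (a sub-semigroup that is a group) of the semigroup T. -/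
def IsSubgroupOf {T : Type} [Semigroup T] (G : Set T) : Prop :=
  (∀ a ∈ G, ∀ b ∈ G, a * b ∈ G) ∧
  ∃ e ∈ G, (∀ g ∈ G, e * g = g ∧ g * e = g) ∧ ∀ g ∈ G, ∃ h ∈ G, g * h = e ∧ h * g = e

/-- The set Σ' = Σ \ Γ. -/
def USem' (m : S → Γ → S → S) (γ₀ : Γ) : Set (USem m γ₀) := {w | ¬ ∃ γ : Γ, w = giota m γ₀ γ}

end GammaSemigroup

section AuxLemmas

variable {S Γ : Type} (m : S → Γ → S → S) (γ₀ : Γ)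

lemma grel_to_eq {a b : FreeSemigroup (S ⊕ Γ)} (h : GRel m γ₀ a b) :
    (a : (GCon m γ₀).Quotient) = b := (Con.eq _).mpr (ConGen.Rel.of _ _ h)

lemma mu_mul (a b : S) : gmu m γ₀ a * gmu m γ₀ b = gmu m γ₀ (m a γ₀ b) := by
  have h := grel_to_eq m γ₀ (Or.inr (Or.inr ⟨a, b, rfl, rfl⟩))
  rw [Con.coe_mul] at h
  exact h

lemma mu_iota_mu (a : S) (γ : Γ) (b : S) :
    gmu m γ₀ a * giota m γ₀ γ * gmu m γ₀ b = gmu m γ₀ (m a γ b) := by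
  have h := grel_to_eq m γ₀ (Or.inr (Or.inl ⟨a, b, γ, rfl, rfl⟩))
  rw [Con.coe_mul, Con.coe_mul] at h
  exact h

lemma iota_iota (γ γ' : Γ) : giota m γ₀ γ * giota m γ₀ γ' = giota m γ₀ γ := by
  have h := grel_to_eq m γ₀ (Or.inl ⟨γ, γ', rfl, rfl⟩)
  rw [Con.coe_mul] at h
  exact h

end AuxLemmas

theorem stmt (S Γ : Type) [Nonempty S] [Nonempty Γ] (m : S → Γ → S → S)
    (assoc : ∀ (a b c : S) (α β : Γ), m (m a α b) β c = m a α (m b β c)) (γ₀ : Γ) (x : S) :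
    pRight (gmu m γ₀ x) =
      gmu m γ₀ '' pRightG m x ∪
        {w | ∃ γ : Γ, ∃ y ∈ pRightG m x, w = gmu m γ₀ y * giota m γ₀ γ} := by
  have hR : ∀ {y : S}, y ∈ pRightG m x → ∀ γ s, m y γ s ∈ pRightG m x := by
    rintro y (⟨γ', s', rfl⟩ | rfl) γ s
    · exact Or.inl ⟨γ', m s' γ s, assoc x s' s γ' γ⟩
    · exact Or.inl ⟨γ, s, rfl⟩
  ext w
  constructor
  · rintro (⟨t, rfl⟩ | rfl)
    · have key : ∀ t : USem m γ₀,
          (∀ y ∈ pRightG m x, gmu m γ₀ y * t ∈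
            gmu m γ₀ '' pRightG m x ∪
              {w | ∃ γ : Γ, ∃ y ∈ pRightG m x, w = gmu m γ₀ y * giota m γ₀ γ}) ∧
          (∀ y ∈ pRightG m x, ∀ γ : Γ, gmu m γ₀ y * giota m γ₀ γ * t ∈
            gmu m γ₀ '' pRightG m x ∪
              {w | ∃ γ : Γ, ∃ y ∈ pRightG m x, w = gmu m γ₀ y * giota m γ₀ γ}) := by
        intro t
        induction t using Con.induction_on with
        | H f =>
          induction f using FreeSemigroup.recOnMul with
          | ih1 a =>
            cases a with
            | inl s =>
              constructor
              · intro y hy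
                left
                exact ⟨m y γ₀ s, hR hy γ₀ s, (mu_mul m γ₀ y s).symm⟩
              · intro y hy γ
                left
                exact ⟨m y γ s, hR hy γ s, (mu_iota_mu m γ₀ y γ s).symm⟩
            | inr γ' =>
              constructor
              · intro y hy
                right
                exact ⟨γ', y, hy, rfl⟩
              · intro y hy γ
                have h1 : gmu m γ₀ y * giota m γ₀ γ *
                    ((of (Sum.inr γ') : FreeSemigroup (S ⊕ Γ)) : USem m γ₀) =
                    gmu m γ₀ y * giota m γ₀ γ := by
                  rw [mul_assoc]
                  show gmu m γ₀ y * (giota m γ₀ γ * giota m γ₀ γ') = _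
                  rw [iota_iota]
                rw [h1]
                exact Or.inr ⟨γ, y, hy, rfl⟩
          | ih2 a f iha ihf =>
            have step : ∀ w : USem m γ₀,
                (w ∈ gmu m γ₀ '' pRightG m x ∪
                  {w | ∃ γ : Γ, ∃ y ∈ pRightG m x, w = gmu m γ₀ y * giota m γ₀ γ}) →
                w * (f : USem m γ₀) ∈
                  gmu m γ₀ '' pRightG m x ∪
                    {w | ∃ γ : Γ, ∃ y ∈ pRightG m x, w = gmu m γ₀ y * giota m γ₀ γ} := by
              rintro w (⟨y, hy, rfl⟩ | ⟨γ, y, hy, rfl⟩)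
              · exact ihf.1 y hy
              · exact ihf.2 y hy γ
            constructor
            · intro y hy
              have : gmu m γ₀ y * ((of a * f : FreeSemigroup (S ⊕ Γ)) : USem m γ₀) =
                  gmu m γ₀ y * ((of a : FreeSemigroup (S ⊕ Γ)) : USem m γ₀) * (f : USem m γ₀) := by
                rw [Con.coe_mul, mul_assoc]
              rw [this]
              exact step _ (iha.1 y hy)
            · intro y hy γ
              have : gmu m γ₀ y * giota m γ₀ γ * ((of a * f : FreeSemigroup (S ⊕ Γ)) : USem m γ₀) =
                  gmu m γ₀ y * giota m γ₀ γ * ((of a : FreeSemigroup (S ⊕ Γ)) : USem m γ₀) *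
                    (f : USem m γ₀) := by
                rw [Con.coe_mul, ← mul_assoc]
              rw [this]
              exact step _ (iha.2 y hy γ)
      exact (key t).1 x (Or.inr rfl)
    · exact Or.inl ⟨x, Or.inr rfl, rfl⟩
  · rintro (⟨y, hy, rfl⟩ | ⟨γ, y, hy, rfl⟩)
    · rcases hy with ⟨γ', s', rfl⟩ | rfl
      · exact Or.inl ⟨giota m γ₀ γ' * gmu m γ₀ s', by rw [← mul_assoc, mu_iota_mu]⟩
      · exact Or.inr rfl
    · rcases hy with ⟨γ', s', rfl⟩ | rfl
      · refine Or.inl ⟨giota m γ₀ γ' * gmu m γ₀ s' * giota m γ₀ γ, ?_⟩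
        rw [← mul_assoc, ← mul_assoc, mu_iota_mu]
      · exact Or.inl ⟨giota m γ₀ γ, rfl⟩
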